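/- Let u : (0,∞) → ℝ be continuous with u ≥ 0, let A : (0,∞) → ℝ with A ≥ 0, and suppose φ : (0,∞) × [0,∞) → ℝ is smooth, solves ∂_x φ = u(ψ) ∂_ψ² φ - A(ψ) φ, satisfies φ(x,0) = 0 for all x, decays with its ψ-derivatives sufficiently fast as ψ → ∞, and that u is twice continuously differentiable with ∂_ψ² u ≤ 0 and (∂_ψ u)(0) ≥ 0. Then x ↦ ∫₀^∞ φ(x,ψ)² dψ is nonincreasing. -/

import Mathlib

open Set MeasureTheory Filter

/-- Partial derivative in the first variable. -/
noncomputable def pdx (f : ℝ → ℝ → ℝ) : ℝ → ℝ → ℝ :=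
  fun x y => deriv (fun x' => f x' y) x

/-- Partial derivative in the second variable. -/
noncomputable def pdy (f : ℝ → ℝ → ℝ) : ℝ → ℝ → ℝ :=
  fun x y => deriv (fun y' => f x y') y

lemma hasDerivAt_snd (φ : ℝ → ℝ → ℝ) (hφ : ContDiff ℝ (⊤ : ℕ∞) (Function.uncurry φ)) (x y : ℝ) :
    HasDerivAt (fun y' => φ x y') (fderiv ℝ (Function.uncurry φ) (x, y) (0, 1)) y := by
  have h1 : HasFDerivAt (Function.uncurry φ) (fderiv ℝ (Function.uncurry φ) (x, y)) (x, y) :=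
    (hφ.differentiable (by simp) (x, y)).hasFDerivAt
  have h2 : HasDerivAt (fun y' : ℝ => ((x, y') : ℝ × ℝ)) ((0 : ℝ), (1 : ℝ)) y := by
    simpa using ((hasDerivAt_const y x).prodMk (hasDerivAt_id y))
  exact h1.comp_hasDerivAt y h2

lemma hasDerivAt_fst (φ : ℝ → ℝ → ℝ) (hφ : ContDiff ℝ (⊤ : ℕ∞) (Function.uncurry φ)) (x y : ℝ) :
    HasDerivAt (fun x' => φ x' y) (fderiv ℝ (Function.uncurry φ) (x, y) (1, 0)) x := by
  have h1 : HasFDerivAt (Function.uncurry φ) (fderiv ℝ (Function.uncurry φ) (x, y)) (x, y) :=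
    (hφ.differentiable (by simp) (x, y)).hasFDerivAt
  have h2 : HasDerivAt (fun x' : ℝ => ((x', y) : ℝ × ℝ)) ((1 : ℝ), (0 : ℝ)) x := by
    simpa using ((hasDerivAt_id x).prodMk (hasDerivAt_const x y))
  exact h1.comp_hasDerivAt x h2

lemma pdy_eq (φ : ℝ → ℝ → ℝ) (hφ : ContDiff ℝ (⊤ : ℕ∞) (Function.uncurry φ)) (x y : ℝ) :
    pdy φ x y = fderiv ℝ (Function.uncurry φ) (x, y) (0, 1) :=
  (hasDerivAt_snd φ hφ x y).deriv

lemma pdx_eq (φ : ℝ → ℝ → ℝ) (hφ : ContDiff ℝ (⊤ : ℕ∞) (Function.uncurry φ)) (x y : ℝ) :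
    pdx φ x y = fderiv ℝ (Function.uncurry φ) (x, y) (1, 0) :=
  (hasDerivAt_fst φ hφ x y).deriv

lemma contDiff_pdy (φ : ℝ → ℝ → ℝ) (hφ : ContDiff ℝ (⊤ : ℕ∞) (Function.uncurry φ)) :
    ContDiff ℝ (⊤ : ℕ∞) (Function.uncurry (pdy φ)) := by
  have h : Function.uncurry (pdy φ) = fun p : ℝ × ℝ => fderiv ℝ (Function.uncurry φ) p (0, 1) :=
    funext fun p => pdy_eq φ hφ p.1 p.2
  rw [h]
  exact (hφ.fderiv_right (by simp)).clm_apply contDiff_const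

lemma contDiff_pdx (φ : ℝ → ℝ → ℝ) (hφ : ContDiff ℝ (⊤ : ℕ∞) (Function.uncurry φ)) :
    ContDiff ℝ (⊤ : ℕ∞) (Function.uncurry (pdx φ)) := by
  have h : Function.uncurry (pdx φ) = fun p : ℝ × ℝ => fderiv ℝ (Function.uncurry φ) p (1, 0) :=
    funext fun p => pdx_eq φ hφ p.1 p.2
  rw [h]
  exact (hφ.fderiv_right (by simp)).clm_apply contDiff_const

lemma hasDerivAt_pdy (φ : ℝ → ℝ → ℝ) (hφ : ContDiff ℝ (⊤ : ℕ∞) (Function.uncurry φ)) (x y : ℝ) :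
    HasDerivAt (fun y' => φ x y') (pdy φ x y) y := by
  rw [pdy_eq φ hφ]; exact hasDerivAt_snd φ hφ x y

lemma hasDerivAt_pdx (φ : ℝ → ℝ → ℝ) (hφ : ContDiff ℝ (⊤ : ℕ∞) (Function.uncurry φ)) (x y : ℝ) :
    HasDerivAt (fun x' => φ x' y) (pdx φ x y) x := by
  rw [pdx_eq φ hφ]; exact hasDerivAt_fst φ hφ x y

lemma cont_slice (φ : ℝ → ℝ → ℝ) (hφ : ContDiff ℝ (⊤ : ℕ∞) (Function.uncurry φ)) (x : ℝ) :
    Continuous (fun y => φ x y) :=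
  hφ.continuous.comp (continuous_const.prodMk continuous_id)

/-- L² damping in von-Mise variables: if `φ` is a smooth solution of
`∂_x φ = u(ψ) ∂_ψ² φ - A(ψ) φ` with `φ(x,0) = 0`, uniform compact support in `ψ`
(the formalization of sufficiently fast decay), `u ≥ 0`, `A ≥ 0`, `u'' ≤ 0`, `u'(0) ≥ 0`,
then `x ↦ ∫₀^∞ φ(x,ψ)² dψ` is nonincreasing on `(0,∞)`. -/
theorem stmt_14 (u u' u'' A : ℝ → ℝ) (φ : ℝ → ℝ → ℝ)
    (hu_nonneg : ∀ ψ ∈ Ici (0:ℝ), 0 ≤ u ψ)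
    (hA_nonneg : ∀ ψ ∈ Ici (0:ℝ), 0 ≤ A ψ)
    (hu1 : ∀ ψ ∈ Ici (0:ℝ), HasDerivWithinAt u (u' ψ) (Ici 0) ψ)
    (hu2 : ∀ ψ ∈ Ici (0:ℝ), HasDerivWithinAt u' (u'' ψ) (Ici 0) ψ)
    (hu2c : ContinuousOn u'' (Ici 0))
    (hconc : ∀ ψ ∈ Ici (0:ℝ), u'' ψ ≤ 0)
    (hu'0 : 0 ≤ u' 0)
    (hφ : ContDiff ℝ (⊤ : ℕ∞) (Function.uncurry φ))
    (hpde : ∀ x ∈ Ioi (0:ℝ), ∀ ψ ∈ Ici (0:ℝ),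
      pdx φ x ψ = u ψ * pdy (pdy φ) x ψ - A ψ * φ x ψ)
    (hbc : ∀ x, φ x 0 = 0)
    (hsupp : ∃ R : ℝ, ∀ x ψ, R ≤ ψ → φ x ψ = 0) :
    AntitoneOn (fun x => ∫ ψ in Ioi (0:ℝ), (φ x ψ)^2) (Ioi 0) := by
  classical
  obtain ⟨R₀, hR₀⟩ := hsupp
  set R : ℝ := max R₀ 1 with hRdef
  have hR1 : (0:ℝ) ≤ R := le_trans zero_le_one (le_max_right _ _)
  have hR : ∀ x ψ, R ≤ ψ → φ x ψ = 0 := fun x ψ h => hR₀ x ψ (le_trans (le_max_left _ _) h)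
  have hucont : ContinuousOn u (Ici 0) := fun ψ hψ => (hu1 ψ hψ).continuousWithinAt
  have hu'cont : ContinuousOn u' (Ici 0) := fun ψ hψ => (hu2 ψ hψ).continuousWithinAt
  have hφ2 := contDiff_pdy φ hφ
  have hIcc : Icc (0:ℝ) R ⊆ Ici 0 := Icc_subset_Ici_self
  have huI : uIcc (0:ℝ) R = Icc 0 R := uIcc_of_le hR1
  set F : ℝ → ℝ := fun x => ∫ ψ in (0:ℝ)..R, (φ x ψ)^2 with hFdef
  set D : ℝ → ℝ := fun x => ∫ ψ in (0:ℝ)..R, 2 * φ x ψ * pdx φ x ψ with hDdef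
  -- Step A : the set integral equals the interval integral
  have hEF : (fun x => ∫ ψ in Ioi (0:ℝ), (φ x ψ)^2) = F := by
    funext x
    have h1 : ∫ ψ in Ioi (0:ℝ), (φ x ψ)^2 = ∫ ψ in Ioc 0 R, (φ x ψ)^2 := by
      refine setIntegral_eq_of_subset_of_forall_diff_eq_zero measurableSet_Ioi
        Ioc_subset_Ioi_self ?_
      intro ψ hψ
      have hRψ : R ≤ ψ := by
        rcases hψ with ⟨h1, h2⟩
        have : ¬(ψ ≤ R) := fun hh => h2 ⟨h1, hh⟩
        exact le_of_lt (not_le.mp this)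
      rw [hR x ψ hRψ]; ring
    rw [h1, hFdef]
    exact (intervalIntegral.integral_of_le hR1).symm
  -- Step B : F has derivative D x₀ at each x₀
  have hderivF : ∀ x₀ ∈ Ioi (0:ℝ), HasDerivAt F (D x₀) x₀ := by
    intro x₀ _
    obtain ⟨M, hM⟩ := (isCompact_Icc.prod isCompact_Icc).exists_bound_of_continuousOn
      (f := fun p : ℝ × ℝ => 2 * φ p.1 p.2 * pdx φ p.1 p.2)
      (s := Icc (x₀ - 1) (x₀ + 1) ×ˢ Icc (0:ℝ) R)
      (((continuous_const.mul hφ.continuous).mul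
        (contDiff_pdx φ hφ).continuous).continuousOn)
    have hdiff : ∀ t : ℝ, ∀ x : ℝ,
        HasDerivAt (fun x' => (φ x' t)^2) (2 * φ x t * pdx φ x t) x := by
      intro t x
      have : HasDerivAt (fun x' => (φ x' t)^2) _ x := (hasDerivAt_pdx φ hφ x t).pow 2
      convert this using 1
      push_cast
      ring
    have key := intervalIntegral.hasDerivAt_integral_of_dominated_loc_of_deriv_le
      (μ := volume) (F := fun x t => (φ x t)^2)
      (F' := fun x t => 2 * φ x t * pdx φ x t) (bound := fun _ => M) (a := 0) (b := R)
      (x₀ := x₀) (Metric.ball_mem_nhds x₀ one_pos)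
      (Eventually.of_forall fun x => (((cont_slice φ hφ x).pow 2)).aestronglyMeasurable)
      (((cont_slice φ hφ x₀).pow 2).intervalIntegrable 0 R)
      (((continuous_const.mul (cont_slice φ hφ x₀)).mul
        (cont_slice (pdx φ) (contDiff_pdx φ hφ) x₀)).aestronglyMeasurable)
      (ae_of_all _ fun t ht x hx => by
        refine hM (x, t) ⟨?_, ?_⟩
        · have := Metric.mem_ball.mp hx
          rw [Real.dist_eq] at this
          constructor <;> [linarith [abs_lt.mp this]; linarith [abs_lt.mp this]]
        · rw [uIoc_of_le hR1] at ht
          exact Ioc_subset_Icc_self ht)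
      (intervalIntegrable_const)
      (ae_of_all _ fun t ht x hx => hdiff t x)
    exact key.2
  -- Step C+D : D x₀ ≤ 0
  have hDnonpos : ∀ x₀ ∈ Ioi (0:ℝ), D x₀ ≤ 0 := by
    intro x₀ hx₀
    set g : ℝ → ℝ := fun ψ => φ x₀ ψ with hgdef
    set g1 : ℝ → ℝ := fun ψ => pdy φ x₀ ψ with hg1def
    set g2 : ℝ → ℝ := fun ψ => pdy (pdy φ) x₀ ψ with hg2def
    have hg : ∀ ψ, HasDerivAt g (g1 ψ) ψ := fun ψ => hasDerivAt_pdy φ hφ x₀ ψ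
    have hg1 : ∀ ψ, HasDerivAt g1 (g2 ψ) ψ := fun ψ => hasDerivAt_pdy (pdy φ) hφ2 x₀ ψ
    have cg : Continuous g := cont_slice φ hφ x₀
    have cg1 : Continuous g1 := cont_slice (pdy φ) hφ2 x₀
    have cg2 : Continuous g2 := cont_slice (pdy (pdy φ)) (contDiff_pdy (pdy φ) hφ2) x₀
    have hgR : g R = 0 := hR x₀ R le_rfl
    have hg0 : g 0 = 0 := hbc x₀
    have hg1R : g1 R = 0 := by
      have ud : UniqueDiffWithinAt ℝ (Ici R) R := uniqueDiffOn_Ici R R self_mem_Ici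
      have h1 : HasDerivWithinAt g (g1 R) (Ici R) R := (hg R).hasDerivWithinAt
      have h2 : HasDerivWithinAt g 0 (Ici R) R :=
        (hasDerivWithinAt_const R (Ici R) (0:ℝ)).congr (fun y hy => hR x₀ y hy) hgR
      exact (h1.derivWithin ud).symm.trans (h2.derivWithin ud)
    -- I1 : integral of derivative of u g g1 vanishes
    have I1 : ∫ ψ in (0:ℝ)..R,
        ((u' ψ * g ψ + u ψ * g1 ψ) * g1 ψ + u ψ * g ψ * g2 ψ) = 0 := by
      have hcont : ContinuousOn (fun ψ => u ψ * g ψ * g1 ψ) (Icc 0 R) :=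
        (((hucont.mono hIcc).mul cg.continuousOn).mul cg1.continuousOn)
      have hderiv : ∀ ψ ∈ Ioo (0:ℝ) R, HasDerivWithinAt (fun ψ => u ψ * g ψ * g1 ψ)
          ((u' ψ * g ψ + u ψ * g1 ψ) * g1 ψ + u ψ * g ψ * g2 ψ) (Ioi ψ) ψ := by
        intro ψ hψ
        have hu : HasDerivAt u (u' ψ) ψ :=
          (hu1 ψ (le_of_lt hψ.1)).hasDerivAt (Ici_mem_nhds hψ.1)
        exact (((hu.mul (hg ψ)).mul (hg1 ψ))).hasDerivWithinAt
      have hint : IntervalIntegrable (fun ψ =>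
          (u' ψ * g ψ + u ψ * g1 ψ) * g1 ψ + u ψ * g ψ * g2 ψ) volume 0 R := by
        apply ContinuousOn.intervalIntegrable
        rw [huI]
        exact ((((hu'cont.mono hIcc).mul cg.continuousOn).add
          ((hucont.mono hIcc).mul cg1.continuousOn)).mul cg1.continuousOn).add
          (((hucont.mono hIcc).mul cg.continuousOn).mul cg2.continuousOn)
      rw [intervalIntegral.integral_eq_sub_of_hasDeriv_right_of_le hR1 hcont hderiv hint]
      rw [hgR, hg0]; ring
    -- I2 : integral of derivative of u' g^2 vanishes
    have I2 : ∫ ψ in (0:ℝ)..R,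
        (u'' ψ * g ψ ^ 2 + u' ψ * (2 * g ψ * g1 ψ)) = 0 := by
      have hcont : ContinuousOn (fun ψ => u' ψ * g ψ ^ 2) (Icc 0 R) :=
        ((hu'cont.mono hIcc).mul (cg.pow 2).continuousOn)
      have hderiv : ∀ ψ ∈ Ioo (0:ℝ) R, HasDerivWithinAt (fun ψ => u' ψ * g ψ ^ 2)
          (u'' ψ * g ψ ^ 2 + u' ψ * (2 * g ψ * g1 ψ)) (Ioi ψ) ψ := by
        intro ψ hψ
        have hu' : HasDerivAt u' (u'' ψ) ψ :=
          (hu2 ψ (le_of_lt hψ.1)).hasDerivAt (Ici_mem_nhds hψ.1)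
        have : HasDerivAt (fun ψ => u' ψ * g ψ ^ 2) _ ψ := hu'.mul (((hg ψ).pow 2 : HasDerivAt (fun ψ => g ψ ^ 2) _ ψ))
        have heq : HasDerivAt (fun ψ => u' ψ * g ψ ^ 2)
            (u'' ψ * g ψ ^ 2 + u' ψ * (2 * g ψ * g1 ψ)) ψ := by
          convert this using 1
          push_cast
          ring
        exact heq.hasDerivWithinAt
      have hint : IntervalIntegrable (fun ψ =>
          u'' ψ * g ψ ^ 2 + u' ψ * (2 * g ψ * g1 ψ)) volume 0 R := by
        apply ContinuousOn.intervalIntegrable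
        rw [huI]
        exact ((hu2c.mono hIcc).mul (cg.pow 2).continuousOn).add
          ((hu'cont.mono hIcc).mul
            ((continuous_const.mul cg).mul cg1).continuousOn)
      rw [intervalIntegral.integral_eq_sub_of_hasDeriv_right_of_le hR1 hcont hderiv hint]
      rw [hgR, hg0]; ring
    -- rewrite D via the PDE and the pointwise identity
    have hDcongr : D x₀ = ∫ ψ in (0:ℝ)..R,
        (2 * ((u' ψ * g ψ + u ψ * g1 ψ) * g1 ψ + u ψ * g ψ * g2 ψ)
          - (u'' ψ * g ψ ^ 2 + u' ψ * (2 * g ψ * g1 ψ))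
          + (u'' ψ * g ψ ^ 2 - 2 * u ψ * g1 ψ ^ 2 - 2 * ((u ψ * g2 ψ - pdx φ x₀ ψ) * g ψ))) := by
      rw [hDdef]
      apply intervalIntegral.integral_congr
      intro ψ hψ
      rw [huI] at hψ
      have hpsi : ψ ∈ Ici (0:ℝ) := hIcc hψ
      show 2 * φ x₀ ψ * pdx φ x₀ ψ
        = 2 * ((u' ψ * φ x₀ ψ + u ψ * pdy φ x₀ ψ) * pdy φ x₀ ψ
            + u ψ * φ x₀ ψ * pdy (pdy φ) x₀ ψ)
          - (u'' ψ * φ x₀ ψ ^ 2 + u' ψ * (2 * φ x₀ ψ * pdy φ x₀ ψ))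
          + (u'' ψ * φ x₀ ψ ^ 2 - 2 * u ψ * pdy φ x₀ ψ ^ 2
            - 2 * ((u ψ * pdy (pdy φ) x₀ ψ - pdx φ x₀ ψ) * φ x₀ ψ))
      rw [hpde x₀ hx₀ ψ hpsi]
      ring
    have int1 : IntervalIntegrable (fun ψ =>
        2 * ((u' ψ * g ψ + u ψ * g1 ψ) * g1 ψ + u ψ * g ψ * g2 ψ)) volume 0 R := by
      apply ContinuousOn.intervalIntegrable
      rw [huI]
      exact continuous_const.continuousOn.mul
        (((((hu'cont.mono hIcc).mul cg.continuousOn).add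
          ((hucont.mono hIcc).mul cg1.continuousOn)).mul cg1.continuousOn).add
          (((hucont.mono hIcc).mul cg.continuousOn).mul cg2.continuousOn))
    have int2 : IntervalIntegrable (fun ψ =>
        u'' ψ * g ψ ^ 2 + u' ψ * (2 * g ψ * g1 ψ)) volume 0 R := by
      apply ContinuousOn.intervalIntegrable
      rw [huI]
      exact ((hu2c.mono hIcc).mul (cg.pow 2).continuousOn).add
        ((hu'cont.mono hIcc).mul ((continuous_const.mul cg).mul cg1).continuousOn)
    have cpx : Continuous (fun ψ => pdx φ x₀ ψ) := cont_slice (pdx φ) (contDiff_pdx φ hφ) x₀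
    have int3 : IntervalIntegrable (fun ψ =>
        u'' ψ * g ψ ^ 2 - 2 * u ψ * g1 ψ ^ 2 - 2 * ((u ψ * g2 ψ - pdx φ x₀ ψ) * g ψ))
        volume 0 R := by
      apply ContinuousOn.intervalIntegrable
      rw [huI]
      exact (((hu2c.mono hIcc).mul (cg.pow 2).continuousOn).sub
        ((continuous_const.continuousOn.mul (hucont.mono hIcc)).mul
          (cg1.pow 2).continuousOn)).sub
        (continuous_const.continuousOn.mul
          ((((hucont.mono hIcc).mul cg2.continuousOn).sub cpx.continuousOn).mul
            cg.continuousOn))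
    have hW : (∫ ψ in (0:ℝ)..R,
        (u'' ψ * g ψ ^ 2 - 2 * u ψ * g1 ψ ^ 2 - 2 * ((u ψ * g2 ψ - pdx φ x₀ ψ) * g ψ))) ≤ 0 := by
      have h := intervalIntegral.integral_nonneg (μ := volume) hR1 (f := fun ψ =>
          -(u'' ψ * g ψ ^ 2 - 2 * u ψ * g1 ψ ^ 2 - 2 * ((u ψ * g2 ψ - pdx φ x₀ ψ) * g ψ))) ?_
      · rw [intervalIntegral.integral_neg] at h
        linarith
      · intro ψ hψ
        have hpsi : ψ ∈ Ici (0:ℝ) := hIcc hψ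
        have h1 := hconc ψ hpsi
        have h2 := hu_nonneg ψ hpsi
        have h3 := hA_nonneg ψ hpsi
        have h4 : (u ψ * g2 ψ - pdx φ x₀ ψ) * g ψ = A ψ * g ψ * g ψ := by
          rw [hpde x₀ hx₀ ψ hpsi]; ring
        rw [h4]
        nlinarith [sq_nonneg (g ψ), sq_nonneg (g1 ψ), mul_nonneg h2 (sq_nonneg (g1 ψ)),
          mul_nonneg h3 (sq_nonneg (g ψ)), mul_nonpos_of_nonpos_of_nonneg h1 (sq_nonneg (g ψ))]
    calc D x₀ = _ := hDcongr
      _ = (∫ ψ in (0:ℝ)..R, (2 * ((u' ψ * g ψ + u ψ * g1 ψ) * g1 ψ + u ψ * g ψ * g2 ψ)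
              - (u'' ψ * g ψ ^ 2 + u' ψ * (2 * g ψ * g1 ψ))))
          + ∫ ψ in (0:ℝ)..R, (u'' ψ * g ψ ^ 2 - 2 * u ψ * g1 ψ ^ 2 - 2 * ((u ψ * g2 ψ - pdx φ x₀ ψ) * g ψ)) :=
        intervalIntegral.integral_add (int1.sub int2) int3
      _ = ((∫ ψ in (0:ℝ)..R, 2 * ((u' ψ * g ψ + u ψ * g1 ψ) * g1 ψ + u ψ * g ψ * g2 ψ))
            - ∫ ψ in (0:ℝ)..R, (u'' ψ * g ψ ^ 2 + u' ψ * (2 * g ψ * g1 ψ)))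
          + ∫ ψ in (0:ℝ)..R, (u'' ψ * g ψ ^ 2 - 2 * u ψ * g1 ψ ^ 2 - 2 * ((u ψ * g2 ψ - pdx φ x₀ ψ) * g ψ)) := by
        rw [intervalIntegral.integral_sub int1 int2]
      _ = (2 * (∫ ψ in (0:ℝ)..R, ((u' ψ * g ψ + u ψ * g1 ψ) * g1 ψ + u ψ * g ψ * g2 ψ)) - 0)
          + ∫ ψ in (0:ℝ)..R, (u'' ψ * g ψ ^ 2 - 2 * u ψ * g1 ψ ^ 2 - 2 * ((u ψ * g2 ψ - pdx φ x₀ ψ) * g ψ)) := by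
        rw [intervalIntegral.integral_const_mul, I2]
      _ ≤ 0 := by rw [I1]; simpa using hW
  -- conclude
  rw [hEF]
  have hint : interior (Ioi (0:ℝ)) = Ioi 0 := interior_Ioi
  refine antitoneOn_of_deriv_nonpos (convex_Ioi 0) ?_ ?_ ?_
  · exact fun x hx => (hderivF x hx).continuousAt.continuousWithinAt
  · rw [hint]
    exact fun x hx => (hderivF x hx).differentiableAt.differentiableWithinAt
  · intro x hx
    rw [hint] at hx
    rw [(hderivF x hx).deriv]
    exact hDnonpos x hx
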